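/- With the setting of the coupled operator M as above, there exists β̄ ≥ 1 such that if β_i ≥ β̄ for all i, then M is coercive (⟨M(v),v⟩ ≥ c|v|² for some c > 0), and consequently, by the Lax–Milgram theorem, for every f ∈ V1 × ... × Vm there exists a unique v* ∈ V1 × ... × Vm such that M(v*) = f. -/

import Mathlib

open ContinuousLinearMap InnerProductSpace

set_option maxHeartbeats 1000000 in
set_option synthInstance.maxHeartbeats 400000 in
/-- For sufficiently large β the operator `M` is coercive and, by Lax–Milgram,
the equation `M v = f` has a unique solution for every `f`. -/
theorem stmt2 {m : ℕ} (V : Fin m → Type*) (K : Type*)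
    [∀ i, NormedAddCommGroup (V i)] [∀ i, InnerProductSpace ℝ (V i)]
    [∀ i, CompleteSpace (V i)]
    [NormedAddCommGroup K] [InnerProductSpace ℝ K] [CompleteSpace K]
    (Λ : ∀ i, V i →L[ℝ] K) (Ki : Fin m → (K →L[ℝ] K)) (R : ∀ i, V i →L[ℝ] V i)
    (hKi : ∀ i, IsSelfAdjoint (Ki i)) (hR : ∀ i, IsSelfAdjoint (R i))
    (r0 : ℝ) (hr0 : 0 < r0)
    (hRcoer : ∀ i (ξ : V i), r0 * ‖ξ‖ ^ 2 ≤ (inner ℝ (R i ξ) ξ : ℝ))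
    (α : Fin m → ℝ) (hα : ∀ i, 0 < α i) :
    ∃ βbar : ℝ, 1 ≤ βbar ∧ ∀ β : Fin m → ℝ, (∀ i, βbar ≤ β i) →
      (∃ c : ℝ, 0 < c ∧ ∀ v : ∀ i, V i,
        c * ∑ i, ‖v i‖ ^ 2 ≤
          ∑ i, (inner ℝ (α i • ((Λ i).adjoint (Ki i (Ki i (∑ j, Λ j (v j)))))
            + β i • (R i (v i))) (v i) : ℝ)) ∧
      (∀ f : ∀ i, V i, ∃! v : ∀ i, V i,
        (fun i => α i • ((Λ i).adjoint (Ki i (Ki i (∑ j, Λ j (v j)))))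
          + β i • (R i (v i))) = f) := by
  classical
  set cK : Fin m → ℝ := fun i => α i * (‖(Λ i).adjoint‖ * (‖Ki i‖ * ‖Ki i‖)) with hcKdef
  have hcK0 : ∀ i, 0 ≤ cK i := fun i => by
    have := (hα i).le; positivity
  set Ctot : ℝ := ∑ i, ∑ j, cK i * ‖Λ j‖ with hCtotdef
  have hC0 : 0 ≤ Ctot := Finset.sum_nonneg fun i _ => Finset.sum_nonneg fun j _ =>
    mul_nonneg (hcK0 i) (norm_nonneg _)
  refine ⟨max 1 ((Ctot + 1) / r0), le_max_left _ _, ?_⟩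
  intro β hβ
  have hβ1 : ∀ i, (1:ℝ) ≤ β i := fun i => le_trans (le_max_left _ _) (hβ i)
  have hβr : ∀ i, Ctot + 1 ≤ β i * r0 := by
    intro i
    have h := le_trans (le_max_right 1 ((Ctot + 1) / r0)) (hβ i)
    have := (div_le_iff₀ hr0).mp h
    linarith
  -- the key coercivity inequality with constant 1
  have key : ∀ v : ∀ i, V i,
      (∑ i, ‖v i‖ ^ 2) ≤ ∑ i, (inner ℝ (α i • ((Λ i).adjoint (Ki i (Ki i (∑ j, Λ j (v j)))))
        + β i • (R i (v i))) (v i) : ℝ) := by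
    intro v
    set w : K := ∑ j, Λ j (v j) with hw
    set N : ℝ := ∑ i, ‖v i‖ ^ 2 with hN
    have hN0 : 0 ≤ N := Finset.sum_nonneg fun i _ => by positivity
    have hvN : ∀ i, ‖v i‖ ^ 2 ≤ N := fun i =>
      Finset.single_le_sum (f := fun i => ‖v i‖ ^ 2) (fun i _ => by positivity)
        (Finset.mem_univ i)
    have hwle : ‖w‖ ≤ ∑ j, ‖Λ j‖ * ‖v j‖ :=
      (norm_sum_le _ _).trans (Finset.sum_le_sum fun j _ => (Λ j).le_opNorm _)
    have hwnn : 0 ≤ ‖w‖ := norm_nonneg _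
    have per : ∀ i, (Ctot + 1) * ‖v i‖ ^ 2 - (∑ j, cK i * ‖Λ j‖) * N ≤
        (inner ℝ (α i • ((Λ i).adjoint (Ki i (Ki i w))) + β i • (R i (v i))) (v i) : ℝ) := by
      intro i
      have hsplit : (inner ℝ (α i • ((Λ i).adjoint (Ki i (Ki i w))) + β i • (R i (v i))) (v i) : ℝ)
          = α i * (inner ℝ ((Λ i).adjoint (Ki i (Ki i w))) (v i) : ℝ)
            + β i * (inner ℝ (R i (v i)) (v i) : ℝ) := by
        simp [inner_add_left, real_inner_smul_left]
      -- R-part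
      have hRi := hRcoer i (v i)
      have hRnn : (0:ℝ) ≤ inner ℝ (R i (v i)) (v i) := le_trans (by positivity) hRi
      have hRpart : (Ctot + 1) * ‖v i‖ ^ 2 ≤ β i * (inner ℝ (R i (v i)) (v i) : ℝ) := by
        have h1 : (Ctot + 1) * ‖v i‖ ^ 2 ≤ (β i * r0) * ‖v i‖ ^ 2 :=
          mul_le_mul_of_nonneg_right (hβr i) (by positivity)
        have h2 : β i * (r0 * ‖v i‖ ^ 2) ≤ β i * (inner ℝ (R i (v i)) (v i) : ℝ) :=
          mul_le_mul_of_nonneg_left hRi (by linarith [hβ1 i])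
        nlinarith
      -- coupling part
      have hPnorm : ‖(Λ i).adjoint (Ki i (Ki i w))‖ ≤ (‖(Λ i).adjoint‖ * (‖Ki i‖ * ‖Ki i‖)) * ‖w‖ := by
        have h1 := (Λ i).adjoint.le_opNorm (Ki i (Ki i w))
        have h2 := (Ki i).le_opNorm (Ki i w)
        have h3 := (Ki i).le_opNorm w
        have hn1 : (0:ℝ) ≤ ‖(Λ i).adjoint‖ := norm_nonneg _
        have hn2 : (0:ℝ) ≤ ‖Ki i‖ := norm_nonneg _
        calc ‖(Λ i).adjoint (Ki i (Ki i w))‖ ≤ ‖(Λ i).adjoint‖ * ‖Ki i (Ki i w)‖ := h1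
          _ ≤ ‖(Λ i).adjoint‖ * (‖Ki i‖ * ‖Ki i w‖) :=
            mul_le_mul_of_nonneg_left h2 hn1
          _ ≤ ‖(Λ i).adjoint‖ * (‖Ki i‖ * (‖Ki i‖ * ‖w‖)) :=
            mul_le_mul_of_nonneg_left (mul_le_mul_of_nonneg_left h3 hn2) hn1
          _ = (‖(Λ i).adjoint‖ * (‖Ki i‖ * ‖Ki i‖)) * ‖w‖ := by ring
      have habs : |(inner ℝ ((Λ i).adjoint (Ki i (Ki i w))) (v i) : ℝ)| ≤
          ‖(Λ i).adjoint (Ki i (Ki i w))‖ * ‖v i‖ := abs_real_inner_le_norm _ _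
      have hge : -((‖(Λ i).adjoint‖ * (‖Ki i‖ * ‖Ki i‖)) * ‖w‖ * ‖v i‖) ≤
          (inner ℝ ((Λ i).adjoint (Ki i (Ki i w))) (v i) : ℝ) := by
        have := neg_abs_le (inner ℝ ((Λ i).adjoint (Ki i (Ki i w))) (v i) : ℝ)
        have hmul : ‖(Λ i).adjoint (Ki i (Ki i w))‖ * ‖v i‖ ≤
            ((‖(Λ i).adjoint‖ * (‖Ki i‖ * ‖Ki i‖)) * ‖w‖) * ‖v i‖ :=
          mul_le_mul_of_nonneg_right hPnorm (norm_nonneg _)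
        nlinarith
      have hApart : -(cK i * ‖w‖ * ‖v i‖) ≤
          α i * (inner ℝ ((Λ i).adjoint (Ki i (Ki i w))) (v i) : ℝ) := by
        have := mul_le_mul_of_nonneg_left hge (hα i).le
        simp only [hcKdef]
        nlinarith
      have hsumbound : cK i * ‖w‖ * ‖v i‖ ≤ (∑ j, cK i * ‖Λ j‖) * N := by
        have h1 : cK i * ‖w‖ * ‖v i‖ ≤ cK i * (∑ j, ‖Λ j‖ * ‖v j‖) * ‖v i‖ := by
          have := mul_le_mul_of_nonneg_left hwle (hcK0 i)
          exact mul_le_mul_of_nonneg_right this (norm_nonneg _)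
        have h2 : cK i * (∑ j, ‖Λ j‖ * ‖v j‖) * ‖v i‖ = ∑ j, cK i * (‖Λ j‖ * ‖v j‖) * ‖v i‖ := by
          rw [Finset.mul_sum, Finset.sum_mul]
        have h3 : ∑ j, cK i * (‖Λ j‖ * ‖v j‖) * ‖v i‖ ≤ ∑ j, cK i * ‖Λ j‖ * N := by
          refine Finset.sum_le_sum fun j _ => ?_
          have hij : ‖v j‖ * ‖v i‖ ≤ N := by
            nlinarith [hvN i, hvN j, sq_nonneg (‖v i‖ - ‖v j‖)]
          have := mul_le_mul_of_nonneg_left hij (mul_nonneg (hcK0 i) (norm_nonneg (Λ j)))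
          nlinarith
        calc cK i * ‖w‖ * ‖v i‖ ≤ cK i * (∑ j, ‖Λ j‖ * ‖v j‖) * ‖v i‖ := h1
          _ = ∑ j, cK i * (‖Λ j‖ * ‖v j‖) * ‖v i‖ := h2
          _ ≤ ∑ j, cK i * ‖Λ j‖ * N := h3
          _ = (∑ j, cK i * ‖Λ j‖) * N := (Finset.sum_mul _ _ _).symm
      rw [hsplit]
      have : -((∑ j, cK i * ‖Λ j‖) * N) ≤
          α i * (inner ℝ ((Λ i).adjoint (Ki i (Ki i w))) (v i) : ℝ) := le_trans (by linarith) hApart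
      linarith
    have hsum := Finset.sum_le_sum fun i (_ : i ∈ Finset.univ) => per i
    have hlhs : ∑ i, ((Ctot + 1) * ‖v i‖ ^ 2 - (∑ j, cK i * ‖Λ j‖) * N) = N := by
      rw [Finset.sum_sub_distrib, ← Finset.mul_sum, ← Finset.sum_mul, ← hCtotdef, ← hN]
      ring
    rw [hlhs] at hsum
    exact hsum
  refine ⟨⟨1, one_pos, fun v => by simpa using key v⟩, ?_⟩
  -- Lax-Milgram part
  haveI : CompleteSpace (PiLp 2 V) := inferInstance
  set S : PiLp 2 V →L[ℝ] K := ∑ j, (Λ j).comp (PiLp.proj 2 V j) with hS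
  set T : ∀ i, PiLp 2 V →L[ℝ] V i := fun i =>
    α i • ((Λ i).adjoint.comp ((Ki i).comp ((Ki i).comp S)))
    + β i • ((R i).comp (PiLp.proj 2 V i)) with hT
  set Mc : PiLp 2 V →L[ℝ] PiLp 2 V :=
    ((PiLp.continuousLinearEquiv 2 ℝ V).symm : (∀ i, V i) →L[ℝ] PiLp 2 V).comp
      (ContinuousLinearMap.pi T) with hMcdef
  have hSapp : ∀ v : PiLp 2 V, S v = ∑ j, Λ j (v j) := fun v => by
    simp [hS, ContinuousLinearMap.sum_apply]
  have hMc : ∀ (v : PiLp 2 V) (i : Fin m),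
      Mc v i = α i • ((Λ i).adjoint (Ki i (Ki i (∑ j, Λ j (v j))))) + β i • (R i (v i)) := by
    intro v i
    simp [hMcdef, hT, hSapp v]
  set B : PiLp 2 V →L[ℝ] PiLp 2 V →L[ℝ] ℝ :=
    LinearMap.mkContinuous₂
      (LinearMap.comp (innerₗ (PiLp 2 V) : PiLp 2 V →ₗ[ℝ] PiLp 2 V →ₗ[ℝ] ℝ)
        (Mc : PiLp 2 V →ₗ[ℝ] PiLp 2 V)) ‖Mc‖
      (fun x y => by
        simp only [LinearMap.comp_apply]
        calc ‖(innerₗ (PiLp 2 V) (Mc x)) y‖ ≤ ‖Mc x‖ * ‖y‖ := by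
              simpa using abs_real_inner_le_norm (Mc x) y
          _ ≤ ‖Mc‖ * ‖x‖ * ‖y‖ :=
            mul_le_mul_of_nonneg_right (Mc.le_opNorm x) (norm_nonneg _)) with hB
  have hBapp : ∀ x y : PiLp 2 V, B x y = (inner ℝ (Mc x) y : ℝ) := fun x y => rfl
  have coercive : IsCoercive B := by
    refine ⟨1, one_pos, fun u => ?_⟩
    rw [hBapp]
    have h1 : (inner ℝ (Mc u) u : ℝ) = ∑ i, (inner ℝ (Mc u i) (u i) : ℝ) := PiLp.inner_apply _ _
    have h2 : ‖u‖ ^ 2 = ∑ i, ‖u i‖ ^ 2 := PiLp.norm_sq_eq_of_L2 V u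
    have h3 := key u
    calc 1 * ‖u‖ * ‖u‖ = ‖u‖ ^ 2 := by ring
      _ = ∑ i, ‖u i‖ ^ 2 := h2
      _ ≤ ∑ i, (inner ℝ (α i • ((Λ i).adjoint (Ki i (Ki i (∑ j, Λ j (u j)))))
            + β i • (R i (u i))) (u i) : ℝ) := h3
      _ = ∑ i, (inner ℝ (Mc u i) (u i) : ℝ) := by
            refine Finset.sum_congr rfl fun i _ => ?_
            rw [hMc u i]
      _ = (inner ℝ (Mc u) u : ℝ) := h1.symm
  set CL := coercive.continuousLinearEquivOfBilin with hCL
  have hCM : ∀ v : PiLp 2 V, CL v = Mc v := by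
    intro v
    refine ext_inner_right ℝ fun w => ?_
    rw [coercive.continuousLinearEquivOfBilin_apply v w, hBapp]
  intro f
  set f' : PiLp 2 V := (WithLp.equiv 2 (∀ i, V i)).symm f with hf'
  refine ⟨(WithLp.equiv 2 (∀ i, V i)) (CL.symm f'), ?_, ?_⟩
  · have hMcf : Mc (CL.symm f') = f' := by rw [← hCM]; exact CL.apply_symm_apply f'
    funext i
    have := hMc (CL.symm f') i
    calc α i • ((Λ i).adjoint (Ki i (Ki i (∑ j, Λ j ((WithLp.equiv 2 (∀ i, V i)) (CL.symm f') j)))))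
          + β i • (R i ((WithLp.equiv 2 (∀ i, V i)) (CL.symm f') i))
        = Mc (CL.symm f') i := this.symm
      _ = f i := by rw [hMcf]; rfl
  · intro v hv
    have hMcv : Mc ((WithLp.equiv 2 (∀ i, V i)).symm v) = f' := by
      apply (PiLp.continuousLinearEquiv 2 ℝ V).injective
      funext i
      calc Mc ((WithLp.equiv 2 (∀ i, V i)).symm v) i
          = α i • ((Λ i).adjoint (Ki i (Ki i (∑ j, Λ j (v j))))) + β i • (R i (v i)) :=
            hMc _ i
        _ = f i := congrFun hv i
        _ = f' i := rfl
    have : CL ((WithLp.equiv 2 (∀ i, V i)).symm v) = f' := by rw [hCM]; exact hMcv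
    have h2 : (WithLp.equiv 2 (∀ i, V i)).symm v = CL.symm f' := by
      rw [← this]; exact (CL.symm_apply_apply _).symm
    calc v = (WithLp.equiv 2 (∀ i, V i)) ((WithLp.equiv 2 (∀ i, V i)).symm v) := rfl
      _ = (WithLp.equiv 2 (∀ i, V i)) (CL.symm f') := by rw [h2]
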